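/- arXiv:1707.00610 — 2 statements merged into one kernel-verified Lean document; each statement's English description precedes it below -/
import Mathlib

section
/- For every Hurst parameter H ∈ (0,1/2), the fOU correlation function satisfies 𝒞_Z(s) = 1 − s^{2H}/Γ(2H+1) + o(s^{2H}) as s → 0⁺; that is, lim_{s→0⁺} ( 𝒞_Z(s) − 1 + s^{2H}/Γ(2H+1) ) / s^{2H} = 0. -/
/-!
Substituting `u = s + v` moves the shift from `|s + v| ^ (2H)` onto the kernel:
`∫ e^{-|v|} |s + v|^{2H} dv = ∫ e^{-|u - s|} |u|^{2H} du`. The kernel is Lipschitz in `s`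
in the weighted sense `|e^{-|u - s|} - e^{-|u|}| ≤ |s| e^{|s|} e^{-|u|}`, so the integral moves
by `O(s)` away from its value `2 Γ(2H + 1)` at `s = 0`. Since `2H < 1`, this is `o(s^{2H})`, and
the term `s^{2H}` in `𝒞_Z` cancels exactly against `s^{2H} / Γ(2H + 1)`.
-/

open MeasureTheory Real Set Filter

/-- The fOU correlation function
`𝒞_Z(s) = Γ(2H+1)⁻¹ ( (1/2) ∫_ℝ e^{-|v|} |s+v|^{2H} dv − s^{2H} )`. -/
noncomputable def corrZ (H : ℝ) (s : ℝ) : ℝ :=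
  (Real.Gamma (2 * H + 1))⁻¹ *
    ((1/2) * (∫ v : ℝ, Real.exp (-|v|) * |s + v| ^ (2 * H)) - s ^ (2 * H))

open Topology

theorem abs_exp_sub_exp_le_mul_exp_max (a b : ℝ) :
    |exp a - exp b| ≤ |a - b| * exp (max a b) := by
  wlog hab : a ≤ b generalizing a b
  · rw [abs_sub_comm, abs_sub_comm a, max_comm]
    exact this b a (le_of_not_ge hab)
  rw [max_eq_right hab, abs_of_nonpos (sub_nonpos.2 (exp_le_exp.2 hab)),
    abs_of_nonpos (sub_nonpos.2 hab)]
  have h := mul_le_mul_of_nonneg_left (add_one_le_exp (a - b)) (exp_pos b).le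
  rw [← exp_add, add_sub_cancel] at h
  linarith

theorem exp_neg_abs_sub_le (u s : ℝ) : exp (-|u - s|) ≤ exp |s| * exp (-|u|) := by
  rw [← exp_add]
  exact exp_le_exp.2 (by linarith [abs_sub_abs_le_abs_sub u s])

theorem abs_exp_neg_abs_sub_sub_exp_neg_abs_le (u s : ℝ) :
    |exp (-|u - s|) - exp (-|u|)| ≤ |s| * exp |s| * exp (-|u|) := by
  have hdiff : |(-|u - s|) - (-|u|)| ≤ |s| := by
    rw [neg_sub_neg]
    simpa using abs_abs_sub_abs_le_abs_sub u (u - s)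
  have hmax : exp (max (-|u - s|) (-|u|)) ≤ exp |s| * exp (-|u|) := by
    rw [← exp_add]
    exact exp_le_exp.2 (max_le (by linarith [abs_sub_abs_le_abs_sub u s])
      (by linarith [abs_nonneg s]))
  calc |exp (-|u - s|) - exp (-|u|)|
      ≤ |(-|u - s|) - (-|u|)| * exp (max (-|u - s|) (-|u|)) := abs_exp_sub_exp_le_mul_exp_max _ _
    _ ≤ |s| * (exp |s| * exp (-|u|)) := mul_le_mul hdiff hmax (exp_pos _).le (abs_nonneg s)
    _ = |s| * exp |s| * exp (-|u|) := by ring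

section ExpAbsKernel

variable {f : ℝ → ℝ}

theorem integrable_exp_neg_abs_sub_mul (hf : Integrable fun u => exp (-|u|) * f u) (s : ℝ) :
    Integrable fun u => exp (-|u - s|) * f u := by
  have hmeas : AEStronglyMeasurable (fun u => exp (-|u - s|) * f u) volume := by
    refine ((by fun_prop : Continuous fun u : ℝ => exp (|u| - |u - s|)).aestronglyMeasurable.mul
      hf.aestronglyMeasurable).congr (Eventually.of_forall fun u => ?_)
    change exp (|u| - |u - s|) * (exp (-|u|) * f u) = _
    rw [← mul_assoc, ← exp_add]
    ring_nf
  refine (hf.norm.const_mul (exp |s|)).mono' hmeas (Eventually.of_forall fun u => ?_)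
  rw [norm_mul, norm_mul, norm_of_nonneg (exp_pos _).le, norm_of_nonneg (exp_pos _).le, ← mul_assoc]
  exact mul_le_mul_of_nonneg_right (exp_neg_abs_sub_le u s) (norm_nonneg _)

theorem abs_integral_exp_neg_abs_mul_shift_sub_le
    (hf : Integrable fun u => exp (-|u|) * f u) (s : ℝ) :
    |(∫ v, exp (-|v|) * f (s + v)) - ∫ v, exp (-|v|) * f v| ≤
      |s| * exp |s| * ∫ v, exp (-|v|) * |f v| := by
  have hshift : ∫ v, exp (-|v|) * f (s + v) = ∫ u, exp (-|u - s|) * f u := by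
    simpa using integral_add_left_eq_self (fun u => exp (-|u - s|) * f u) s
  have hbound : Integrable fun u => |s| * exp |s| * (exp (-|u|) * |f u|) := by
    refine (hf.norm.const_mul (|s| * exp |s|)).congr (Eventually.of_forall fun u => ?_)
    simp [abs_of_pos (exp_pos _)]
  rw [hshift, ← integral_sub (integrable_exp_neg_abs_sub_mul hf s) hf,
    ← integral_const_mul (|s| * exp |s|) fun u => exp (-|u|) * |f u|, ← norm_eq_abs]
  refine norm_integral_le_of_norm_le hbound (Eventually.of_forall fun u => ?_)
  rw [norm_eq_abs, ← sub_mul, abs_mul, ← mul_assoc]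
  exact mul_le_mul_of_nonneg_right (abs_exp_neg_abs_sub_sub_exp_neg_abs_le u s) (abs_nonneg _)

theorem tendsto_integral_exp_neg_abs_mul_shift_sub_div_rpow
    (hf : Integrable fun u => exp (-|u|) * f u) {p : ℝ} (hp : p < 1) :
    Tendsto (fun s => ((∫ v, exp (-|v|) * f (s + v)) - ∫ v, exp (-|v|) * f v) / s ^ p)
      (𝓝[>] 0) (𝓝 0) := by
  set C := ∫ v, exp (-|v|) * |f v|
  have hlim : Tendsto (fun s : ℝ => s ^ (1 - p) * (exp s * C)) (𝓝[>] 0) (𝓝 0) := by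
    have hcont : ContinuousAt (fun s : ℝ => s ^ (1 - p) * (exp s * C)) 0 :=
      (continuousAt_rpow_const 0 (1 - p) (Or.inr (by linarith))).mul (by fun_prop)
    simpa [zero_rpow (by linarith : 1 - p ≠ 0)] using hcont.tendsto.mono_left nhdsWithin_le_nhds
  refine squeeze_zero_norm' ?_ hlim
  filter_upwards [self_mem_nhdsWithin] with s (hs : 0 < s)
  have hsp := rpow_pos_of_pos hs p
  rw [norm_div, norm_of_nonneg hsp.le, div_le_iff₀ hsp, norm_eq_abs]
  calc _ ≤ |s| * exp |s| * C := abs_integral_exp_neg_abs_mul_shift_sub_le hf s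
    _ = s ^ (1 - p) * (exp s * C) * s ^ p := by
      rw [abs_of_pos hs, rpow_sub hs, rpow_one]
      field_simp

end ExpAbsKernel

theorem integral_exp_neg_abs_mul_abs_rpow {q : ℝ} (hq : -1 < q) :
    ∫ v : ℝ, exp (-|v|) * |v| ^ q = 2 * Gamma (q + 1) := by
  rw [Gamma_eq_integral (by linarith)]
  simpa using integral_comp_abs (f := fun x => exp (-x) * x ^ q)

-- A non-integrable function has Bochner integral `0`.
theorem integrable_exp_neg_abs_mul_abs_rpow {q : ℝ} (hq : -1 < q) :
    Integrable fun v : ℝ => exp (-|v|) * |v| ^ q :=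
  Integrable.of_integral_ne_zero <| by
    rw [integral_exp_neg_abs_mul_abs_rpow hq]
    exact mul_ne_zero two_ne_zero (Gamma_pos_of_pos (by linarith)).ne'

/-- For every `H ∈ (0,1/2)`,
`𝒞_Z(s) = 1 − s^{2H}/Γ(2H+1) + o(s^{2H})` as `s → 0⁺`, i.e.
`lim_{s→0⁺} ( 𝒞_Z(s) − 1 + s^{2H}/Γ(2H+1) ) / s^{2H} = 0`. -/
theorem corrZ_shortTime_expansion (H : ℝ) (hH : H ∈ Set.Ioo (0 : ℝ) (1/2)) :
    Tendsto
      (fun s : ℝ =>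
        (corrZ H s - 1 + s ^ (2 * H) / Real.Gamma (2 * H + 1)) / s ^ (2 * H))
      (nhdsWithin 0 (Set.Ioi 0)) (nhds 0) := by
  obtain ⟨hH0, hH1⟩ := hH
  have hp : -1 < 2 * H := by linarith
  have hΓ : Gamma (2 * H + 1) ≠ 0 := (Gamma_pos_of_pos (by linarith)).ne'
  have hf := integrable_exp_neg_abs_mul_abs_rpow hp
  have hlim := (tendsto_integral_exp_neg_abs_mul_shift_sub_div_rpow hf
    (by linarith : 2 * H < 1)).const_mul (2 * Gamma (2 * H + 1))⁻¹
  rw [mul_zero] at hlim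
  refine hlim.congr fun s => ?_
  rw [← mul_div_assoc]
  congr 1
  rw [corrZ, integral_exp_neg_abs_mul_abs_rpow hp]
  field_simp
  ring
end

section
/- For every Hurst parameter H ∈ (0,1/2), the fOU correlation function satisfies 𝒞_Z(s) = s^{2H-2}/Γ(2H−1) + o(s^{2H-2}) as s → ∞; that is, lim_{s→∞} ( 𝒞_Z(s) − s^{2H-2}/Γ(2H−1) ) / s^{2H-2} = 0, where Γ(2H−1) denotes the value of the Gamma function at 2H−1 ∈ (−1,0). -/
open MeasureTheory Real Set Filter Topology

lemma integrable_comp_abs {f : ℝ → ℝ} (hf : IntegrableOn f (Ioi 0)) :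
    Integrable (fun x : ℝ => f |x|) := by
  have h_Ioi : IntegrableOn (fun x : ℝ => f |x|) (Ioi 0) :=
    hf.congr_fun (fun x hx => by rw [abs_of_pos hx]) measurableSet_Ioi
  have h_Iic : IntegrableOn (fun x : ℝ => f |x|) (Iic 0) := by
    rw [← Measure.map_neg_eq_self (volume : Measure ℝ),
      measurableEmbedding_neg.integrableOn_map_iff]
    simp_rw [Function.comp_def, abs_neg, neg_preimage, neg_Iic, neg_zero]
    exact (integrableOn_Ici_iff_integrableOn_Ioi (by simp)).mpr h_Ioi
  simpa [Iic_union_Ioi] using h_Iic.union h_Ioi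

lemma integrable_abs_pow_mul_exp_neg_abs (n : ℕ) :
    Integrable (fun v : ℝ => |v| ^ n * exp (-|v|)) := by
  refine integrable_comp_abs (f := fun x => x ^ n * exp (-x)) ?_
  refine (GammaIntegral_convergent (s := n + 1) (by positivity)).congr_fun (fun x _ => ?_)
    measurableSet_Ioi
  simp [mul_comm]

lemma integrable_pow_mul_exp_neg_abs (n : ℕ) :
    Integrable (fun v : ℝ => v ^ n * exp (-|v|)) :=
  (integrable_norm_iff (by fun_prop)).mp <| by
    simpa [abs_mul] using integrable_abs_pow_mul_exp_neg_abs n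

lemma integral_abs_pow_mul_exp_neg_abs (n : ℕ) :
    ∫ v : ℝ, |v| ^ n * exp (-|v|) = 2 * n.factorial := by
  rw [integral_comp_abs (f := fun x => x ^ n * exp (-x)), ← Gamma_nat_eq_factorial,
    Gamma_eq_integral (by positivity)]
  congr 1
  refine setIntegral_congr_fun measurableSet_Ioi fun x _ => ?_
  simp [mul_comm]

lemma integral_mul_exp_neg_abs : ∫ v : ℝ, v * exp (-|v|) = 0 := by
  have h := integral_neg_eq_self (fun v : ℝ => v * exp (-|v|)) volume
  simp only [abs_neg, neg_mul, integral_neg] at h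
  linarith

noncomputable def rpowRemainder (α u : ℝ) : ℝ := |1 + u| ^ α - 1 - α * u

section rpowRemainder

variable {α : ℝ}

lemma hasDerivAt_rpowRemainder {t : ℝ} (ht : -1 < t) :
    HasDerivAt (rpowRemainder α) (α * (1 + t) ^ (α - 1) - α) t := by
  have hpow : HasDerivAt (fun u : ℝ => (1 + u) ^ α) (α * (1 + t) ^ (α - 1)) t := by
    simpa using ((hasDerivAt_id' t).const_add 1).rpow_const (p := α) (Or.inl (by linarith))
  refine ((hpow.sub_const 1).sub ((hasDerivAt_id t).const_mul α)).congr_deriv (by ring)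
    |>.congr_of_eventuallyEq ?_
  filter_upwards [Ioi_mem_nhds ht] with u hu
  rw [rpowRemainder, abs_of_pos (by linarith [mem_Ioi.mp hu])]
  rfl

lemma hasDerivAt_deriv_rpowRemainder {t : ℝ} (ht : -1 < t) :
    HasDerivAt (fun u : ℝ => α * (1 + u) ^ (α - 1) - α) (α * (α - 1) * (1 + t) ^ (α - 2)) t := by
  refine ((((hasDerivAt_id' t).const_add 1).rpow_const (p := α - 1)
    (Or.inl (by linarith))).const_mul α).sub_const α |>.congr_deriv ?_
  rw [show α - 1 - 1 = α - 2 by ring]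
  ring

lemma abs_rpowRemainder_le_sq_of_abs_le_half (hα₀ : 0 ≤ α) (hα₁ : α ≤ 1) {u : ℝ}
    (hu : |u| ≤ 1 / 2) : |rpowRemainder α u| ≤ u ^ 2 := by
  have hball : ∀ t ∈ Metric.closedBall (0 : ℝ) (1 / 2), -1 < t := fun t ht => by
    rw [mem_closedBall_zero_iff, norm_eq_abs] at ht
    linarith [neg_abs_le t]
  have hsecond : ∀ t ∈ Metric.closedBall (0 : ℝ) (1 / 2),
      ‖α * (α - 1) * (1 + t) ^ (α - 2)‖ ≤ 1 := by
    intro t ht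
    rw [mem_closedBall_zero_iff, norm_eq_abs] at ht
    have ht' : 1 / 2 ≤ 1 + t := by linarith [neg_abs_le t]
    have hpow : (1 + t) ^ (α - 2) ≤ 4 :=
      calc (1 + t) ^ (α - 2) ≤ (1 / 2 : ℝ) ^ (α - 2) :=
            rpow_le_rpow_of_nonpos (by norm_num) ht' (by linarith)
        _ ≤ (1 / 2 : ℝ) ^ (-2 : ℝ) := rpow_le_rpow_of_exponent_ge (by norm_num) (by norm_num)
            (by linarith)
        _ = 4 := by norm_num [rpow_neg]
    rw [norm_mul, norm_eq_abs, norm_eq_abs, abs_of_pos (rpow_pos_of_pos (by linarith) _)]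
    have hcoef : |α * (α - 1)| ≤ 1 / 4 := by
      rw [abs_le]; constructor <;> nlinarith [sq_nonneg (α - 1 / 2)]
    nlinarith [abs_nonneg (α * (α - 1)), rpow_pos_of_pos (by linarith : (0 : ℝ) < 1 + t) (α - 2)]
  have hfirst : ∀ t ∈ Metric.closedBall (0 : ℝ) (1 / 2), ‖α * (1 + t) ^ (α - 1) - α‖ ≤ |t| := by
    intro t ht
    simpa using (convex_closedBall (0 : ℝ) (1 / 2)).norm_image_sub_le_of_norm_hasDerivWithin_le
      (fun x hx => (hasDerivAt_deriv_rpowRemainder (hball x hx)).hasDerivWithinAt) hsecond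
      (Metric.mem_closedBall_self (by norm_num)) ht
  have hsub : Metric.closedBall (0 : ℝ) |u| ⊆ Metric.closedBall 0 (1 / 2) :=
    Metric.closedBall_subset_closedBall hu
  have h := (convex_closedBall (0 : ℝ) |u|).norm_image_sub_le_of_norm_hasDerivWithin_le (C := |u|)
    (y := u) (fun x hx => (hasDerivAt_rpowRemainder (hball x (hsub hx))).hasDerivWithinAt)
    (fun x hx => (hfirst x (hsub hx)).trans (by simpa using hx))
    (Metric.mem_closedBall_self (abs_nonneg u)) (by simp)
  simpa [rpowRemainder, sq] using h

lemma abs_rpowRemainder_le (hα₀ : 0 ≤ α) (hα₁ : α ≤ 1) (u : ℝ) :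
    |rpowRemainder α u| ≤ 8 * u ^ 2 := by
  rcases le_or_gt |u| (1 / 2) with hu | hu
  · nlinarith [abs_rpowRemainder_le_sq_of_abs_le_half hα₀ hα₁ hu, sq_nonneg u]
  · have hpow : |1 + u| ^ α ≤ 1 + |u| := by
      rcases le_or_gt |1 + u| 1 with h | h
      · linarith [rpow_le_one (abs_nonneg (1 + u)) h hα₀, abs_nonneg u]
      · calc |1 + u| ^ α ≤ |1 + u| := rpow_le_self_of_one_le h.le hα₁
          _ ≤ 1 + |u| := by simpa using abs_add_le 1 u
    have hlin : |α * u| ≤ |u| := by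
      rw [abs_mul, abs_of_nonneg hα₀]
      exact mul_le_of_le_one_left (abs_nonneg u) hα₁
    have hsq : |u| ^ 2 = u ^ 2 := sq_abs u
    rw [rpowRemainder, abs_le]
    constructor <;> nlinarith [abs_le.mp hlin, rpow_nonneg (abs_nonneg (1 + u)) α]

lemma tendsto_rpowRemainder_div_sq (α : ℝ) :
    Tendsto (fun u => rpowRemainder α u / u ^ 2) (𝓝[≠] 0) (𝓝 (α * (α - 1) / 2)) := by
  have hderiv : (fun u : ℝ => α * (1 + u) ^ (α - 1) - α - α * (α - 1) * u) =o[𝓝 0] fun u => u := by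
    simpa [mul_comm] using hasDerivAt_iff_isLittleO_nhds_zero.mp
      (hasDerivAt_deriv_rpowRemainder (α := α) (t := 0) (by norm_num))
  have hIoi : 𝓝[Ioi (-1 : ℝ)] 0 = 𝓝 0 := nhdsWithin_eq_nhds.2 (Ioi_mem_nhds (by norm_num))
  have hsmall : (fun u => rpowRemainder α u - α * (α - 1) / 2 * u ^ 2) =o[𝓝 0] fun u => u ^ 2 := by
    have h := Convex.isLittleO_pow_succ_real (convex_Ioi (-1)) (x₀ := 0) (by norm_num) (n := 1)
      (f := fun u => rpowRemainder α u - α * (α - 1) / 2 * u ^ 2)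
      (f' := fun u => α * (1 + u) ^ (α - 1) - α - α * (α - 1) * u)
      (fun x hx => (((hasDerivAt_rpowRemainder hx).sub
        ((hasDerivAt_pow 2 x).const_mul (α * (α - 1) / 2))).congr_deriv (by ring)).hasDerivWithinAt)
      (by simpa [hIoi] using hderiv)
    simpa [hIoi, rpowRemainder] using h
  rw [← zero_add (α * (α - 1) / 2)]
  refine (hsmall.tendsto_div_nhds_zero.mono_left nhdsWithin_le_nhds |>.add_const _).congr' ?_
  filter_upwards [self_mem_nhdsWithin] with u hu
  have hu : u ≠ 0 := hu
  field_simp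
  ring

end rpowRemainder

section Asymptotics

variable {α : ℝ}

lemma abs_sq_mul_rpowRemainder_div_le (hα₀ : 0 ≤ α) (hα₁ : α ≤ 1) (s v : ℝ) :
    |s ^ 2 * rpowRemainder α (v / s)| ≤ 8 * v ^ 2 := by
  rcases eq_or_ne s 0 with rfl | hs
  · simpa using sq_nonneg v
  calc |s ^ 2 * rpowRemainder α (v / s)| ≤ s ^ 2 * (8 * (v / s) ^ 2) := by
        rw [abs_mul, abs_of_nonneg (sq_nonneg s)]
        exact mul_le_mul_of_nonneg_left (abs_rpowRemainder_le hα₀ hα₁ _) (sq_nonneg s)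
    _ = 8 * v ^ 2 := by field_simp

lemma tendsto_sq_mul_rpowRemainder_div (α v : ℝ) :
    Tendsto (fun s : ℝ => s ^ 2 * rpowRemainder α (v / s)) atTop
      (𝓝 (α * (α - 1) / 2 * v ^ 2)) := by
  rcases eq_or_ne v 0 with rfl | hv
  · simp [rpowRemainder]
  have hvs : Tendsto (fun s : ℝ => v / s) atTop (𝓝[≠] 0) :=
    tendsto_nhdsWithin_iff.2 ⟨tendsto_const_nhds.div_atTop tendsto_id,
      (eventually_ne_atTop 0).mono fun s hs => div_ne_zero hv hs⟩
  refine ((tendsto_rpowRemainder_div_sq α).comp hvs |>.mul_const (v ^ 2)).congr' ?_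
  filter_upwards [eventually_ne_atTop 0] with s hs
  simp only [Function.comp_apply]
  field_simp

lemma integrable_exp_neg_abs_mul_sq_mul_rpowRemainder (hα₀ : 0 ≤ α) (hα₁ : α ≤ 1) (s : ℝ) :
    Integrable (fun v : ℝ => exp (-|v|) * (s ^ 2 * rpowRemainder α (v / s))) := by
  refine ((integrable_pow_mul_exp_neg_abs 2).const_mul 8).mono'
    (by unfold rpowRemainder; fun_prop) ?_
  filter_upwards with v
  rw [norm_mul, norm_of_nonneg (exp_pos _).le, norm_eq_abs]
  nlinarith [abs_sq_mul_rpowRemainder_div_le hα₀ hα₁ s v, exp_pos (-|v|)]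

lemma tendsto_integral_exp_neg_abs_mul_sq_mul_rpowRemainder (hα₀ : 0 ≤ α) (hα₁ : α ≤ 1) :
    Tendsto (fun s : ℝ => ∫ v : ℝ, exp (-|v|) * (s ^ 2 * rpowRemainder α (v / s))) atTop
      (𝓝 (2 * (α * (α - 1)))) := by
  have hlim : ∫ v : ℝ, exp (-|v|) * (α * (α - 1) / 2 * v ^ 2) = 2 * (α * (α - 1)) := by
    have hfun : (fun v : ℝ => exp (-|v|) * (α * (α - 1) / 2 * v ^ 2))
        = fun v => α * (α - 1) / 2 * (|v| ^ 2 * exp (-|v|)) := by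
      ext v
      rw [sq_abs]
      ring
    rw [hfun, integral_const_mul, integral_abs_pow_mul_exp_neg_abs]
    norm_num
    ring
  rw [← hlim]
  refine tendsto_integral_filter_of_dominated_convergence (fun v => 8 * (v ^ 2 * exp (-|v|)))
    (Eventually.of_forall fun s =>
      (integrable_exp_neg_abs_mul_sq_mul_rpowRemainder hα₀ hα₁ s).aestronglyMeasurable)
    (Eventually.of_forall fun s => Eventually.of_forall fun v => ?_)
    ((integrable_pow_mul_exp_neg_abs 2).const_mul 8)
    (ae_of_all _ fun v => (tendsto_sq_mul_rpowRemainder_div α v).const_mul _)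
  rw [norm_mul, norm_of_nonneg (exp_pos _).le, norm_eq_abs]
  nlinarith [abs_sq_mul_rpowRemainder_div_le hα₀ hα₁ s v, exp_pos (-|v|)]

lemma exp_neg_abs_mul_abs_add_rpow {s : ℝ} (hs : 0 < s) (v : ℝ) :
    exp (-|v|) * |s + v| ^ α
      = s ^ (α - 2) * (exp (-|v|) * (s ^ 2 * rpowRemainder α (v / s)))
        + s ^ α * exp (-|v|) + α * s ^ (α - 1) * (v * exp (-|v|)) := by
  have habs : |s + v| ^ α = s ^ α * |1 + v / s| ^ α := by
    rw [← abs_of_pos hs, ← mul_rpow (abs_nonneg s) (abs_nonneg _), ← abs_mul, abs_of_pos hs,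
      mul_add, mul_one, mul_div_cancel₀ v hs.ne']
  rw [habs, rpowRemainder, rpow_sub hs, rpow_sub_one hs.ne', rpow_two]
  field_simp
  ring

lemma half_integral_exp_neg_abs_mul_rpow_sub (hα₀ : 0 ≤ α) (hα₁ : α ≤ 1) {s : ℝ} (hs : 0 < s) :
    (1 / 2) * (∫ v : ℝ, exp (-|v|) * |s + v| ^ α) - s ^ α
      = s ^ (α - 2) * ((1 / 2) * ∫ v : ℝ, exp (-|v|) * (s ^ 2 * rpowRemainder α (v / s))) := by
  have h₀ : ∫ v : ℝ, exp (-|v|) = 2 := by simpa using integral_abs_pow_mul_exp_neg_abs 0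
  have hR := (integrable_exp_neg_abs_mul_sq_mul_rpowRemainder hα₀ hα₁ s).const_mul (s ^ (α - 2))
  have hE : Integrable (fun v : ℝ => s ^ α * exp (-|v|)) := by
    simpa using (integrable_pow_mul_exp_neg_abs 0).const_mul (s ^ α)
  have hV : Integrable (fun v : ℝ => α * s ^ (α - 1) * (v * exp (-|v|))) := by
    simpa using (integrable_pow_mul_exp_neg_abs 1).const_mul (α * s ^ (α - 1))
  simp_rw [exp_neg_abs_mul_abs_add_rpow hs]
  rw [integral_add (hR.fun_add hE) hV, integral_add hR hE, integral_const_mul, integral_const_mul,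
    integral_const_mul, h₀, integral_mul_exp_neg_abs]
  ring

lemma tendsto_half_integral_exp_neg_abs_mul_rpow_sub_div (hα₀ : 0 ≤ α) (hα₁ : α ≤ 1) :
    Tendsto (fun s : ℝ => ((1 / 2) * (∫ v : ℝ, exp (-|v|) * |s + v| ^ α) - s ^ α) / s ^ (α - 2))
      atTop (𝓝 (α * (α - 1))) := by
  have h := (tendsto_integral_exp_neg_abs_mul_sq_mul_rpowRemainder hα₀ hα₁).const_mul (1 / 2)
  rw [show 1 / 2 * (2 * (α * (α - 1))) = α * (α - 1) by ring] at h
  refine h.congr' ?_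
  filter_upwards [eventually_gt_atTop 0] with s hs
  rw [half_integral_exp_neg_abs_mul_rpow_sub hα₀ hα₁ hs,
    mul_div_cancel_left₀ _ (rpow_pos_of_pos hs _).ne']

end Asymptotics

lemma Gamma_add_one_eq_mul_Gamma_sub_one {α : ℝ} (h₀ : α ≠ 0) (h₁ : α ≠ 1) :
    Gamma (α + 1) = α * (α - 1) * Gamma (α - 1) := by
  have h := Gamma_add_one (sub_ne_zero.mpr h₁)
  rw [sub_add_cancel] at h
  rw [Gamma_add_one h₀, h, mul_assoc]

/-- For every `H ∈ (0,1/2)`,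
`𝒞_Z(s) = s^{2H-2}/Γ(2H−1) + o(s^{2H-2})` as `s → ∞`, i.e.
`lim_{s→∞} ( 𝒞_Z(s) − s^{2H-2}/Γ(2H−1) ) / s^{2H-2} = 0`,
with `Γ(2H−1)` the Gamma function at `2H−1 ∈ (−1,0)`. -/
theorem corrZ_longTime_expansion (H : ℝ) (hH : H ∈ Set.Ioo (0 : ℝ) (1/2)) :
    Tendsto
      (fun s : ℝ =>
        (corrZ H s - s ^ (2 * H - 2) / Real.Gamma (2 * H - 1)) / s ^ (2 * H - 2))
      atTop (nhds 0) := by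
  obtain ⟨hH₀, hH₁⟩ := hH
  have hα : 2 * H * (2 * H - 1) ≠ 0 := mul_ne_zero (by linarith) (by linarith)
  have h := ((tendsto_half_integral_exp_neg_abs_mul_rpow_sub_div (α := 2 * H) (by linarith)
    (by linarith)).const_mul (Gamma (2 * H + 1))⁻¹).sub_const (Gamma (2 * H - 1))⁻¹
  have hlimit : (Gamma (2 * H + 1))⁻¹ * (2 * H * (2 * H - 1)) - (Gamma (2 * H - 1))⁻¹ = 0 := by
    rw [Gamma_add_one_eq_mul_Gamma_sub_one (by linarith) (by linarith), mul_inv, mul_right_comm,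
      inv_mul_cancel₀ hα, one_mul, sub_self]
  rw [hlimit] at h
  refine h.congr' ?_
  filter_upwards [eventually_gt_atTop 0] with s hs
  have hs' : s ^ (2 * H - 2) ≠ 0 := (rpow_pos_of_pos hs _).ne'
  rw [corrZ, sub_div _ (s ^ _ / _), div_div_cancel_left' hs', mul_div_assoc]
end
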